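/- (Lemma A.4 of the paper, inductive step.) Let W ⊆ V with |W| ≥ 3, and suppose there exist X ⊆ V with W ⊆ X and i ∈ W such that D[X] is a directed sub-block, i is reachable in D[W] from every other vertex of W, and i is reachable in D[X] from every other vertex of X. Suppose W′ = W ∪ {k} (with k ∈ V ∖ W) is obtained from W by one exact generation step. Then there exists Y ⊆ V with W′ ⊆ Y such that D[Y] is a directed sub-block, i is reachable in D[W′] from every other vertex of W′, and i is reachable in D[Y] from every other vertex of Y. -/

import Mathlib

open Set

variable {V : Type*}

/-- One arc step within the induced subgraph on the vertex set `S`. -/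
def StepIn (A : V → V → Prop) (S : Set V) (u v : V) : Prop :=
  u ∈ S ∧ v ∈ S ∧ A u v

/-- `v` is reachable from `u` by a directed path in the induced subgraph on `S`
(every vertex is reachable from itself, provided it lies in `S`). -/
def ReachIn (A : V → V → Prop) (S : Set V) (u v : V) : Prop :=
  u ∈ S ∧ Relation.ReflTransGen (StepIn A S) u v

/-- `IN(X)`: the set of vertices from which some member of `X` is reachable,
computed in the induced subgraph on `S`. -/
def InSet (A : V → V → Prop) (S : Set V) (X : Set V) : Set V :=
  {u | ∃ x ∈ X, ReachIn A S u x}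

/-- `Z` is dynamically partitioning with respect to `X` and `Y`:
`IN(X) ∩ IN(Y) = ∅` computed in the induced subgraph `D − Z`. -/
def DynPart (A : V → V → Prop) (X Y Z : Set V) : Prop :=
  InSet A Zᶜ X ∩ InSet A Zᶜ Y = ∅

/-- `StepsLe r n u v`: `v` can be reached from `u` in at most `n` `r`-steps. -/
def StepsLe (r : V → V → Prop) : ℕ → V → V → Prop
  | 0, u, v => u = v
  | n + 1, u, v => u = v ∨ ∃ w, r u w ∧ StepsLe r n w v

/-- `v` is reachable from `u` by a directed path using at most `n` arcs
in the induced subgraph on `S`. -/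
def ReachInLe (A : V → V → Prop) (S : Set V) (n : ℕ) (u v : V) : Prop :=
  u ∈ S ∧ StepsLe (StepIn A S) n u v

/-- `IN_a(X)` computed in the induced subgraph on `S`. -/
def InSetLe (A : V → V → Prop) (S : Set V) (a : ℕ) (X : Set V) : Set V :=
  {u | ∃ x ∈ X, ReachInLe A S a u x}

/-- The vertex `i` is cycle-partitioning at order `x` with respect to `X` and `Y`:
`IN_a(X) ∩ IN_b(Y) = ∅` in `D − {i}` for all `a + b = x`. -/
def CyclePart (A : V → V → Prop) (X Y : Set V) (i : V) (x : ℕ) : Prop :=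
  ∀ a b : ℕ, a + b = x → InSetLe A {i}ᶜ a X ∩ InSetLe A {i}ᶜ b Y = ∅

/-- One adjacency step of the underlying (simple) graph of `D[W]`. -/
def UStep (A : V → V → Prop) (W : Set V) (u v : V) : Prop :=
  u ∈ W ∧ v ∈ W ∧ u ≠ v ∧ (A u v ∨ A v u)

/-- The underlying graph of `D[W]` is connected. -/
def UConnected (A : V → V → Prop) (W : Set V) : Prop :=
  W.Nonempty ∧ ∀ u ∈ W, ∀ v ∈ W, Relation.ReflTransGen (UStep A W) u v

/-- The underlying graph of `D[W]` is biconnected: at least 3 vertices, connected,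
and deleting any single vertex leaves a connected graph. -/
def Biconnected (A : V → V → Prop) (W : Set V) : Prop :=
  3 ≤ W.ncard ∧ UConnected A W ∧ ∀ v ∈ W, UConnected A (W \ {v})

/-- `D[W]` is a directed sub-block: some vertex of `W` is reachable in `D[W]` from
every other vertex of `W`, and the underlying graph of `D[W]` is biconnected. -/
def DirectedSubBlock (A : V → V → Prop) (W : Set V) : Prop :=
  (∃ i ∈ W, ∀ j ∈ W, ReachIn A W j i) ∧ Biconnected A W

/-- A directed sub-block is a transmission block iff it is maximal. -/
def TransmissionBlock (A : V → V → Prop) (W : Set V) : Prop :=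
  DirectedSubBlock A W ∧ ∀ U : Set V, W ⊂ U → ¬ DirectedSubBlock A U

/-- A connected pair: a two-element set `{i, j}` with an arc between `i` and `j`. -/
def ConnectedPair (A : V → V → Prop) (W : Set V) : Prop :=
  ∃ i j : V, i ≠ j ∧ W = {i, j} ∧ (A i j ∨ A j i)

/-- `W'` is obtained from `W` by one exact generation step. -/
def ExactStep (A : V → V → Prop) (W W' : Set V) : Prop :=
  ∃ k, k ∉ W ∧ W' = W ∪ {k} ∧ ∃ j ∈ W, A k j ∧ ¬ DynPart A {k} (W \ {j}) {j}

/-- `W` is the last term of a finite chain of exact generation steps whose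
first term is a connected pair. -/
def GeneratedFromPair (A : V → V → Prop) (W : Set V) : Prop :=
  ∃ P : Set V, ConnectedPair A P ∧ Relation.ReflTransGen (ExactStep A) P W

/-- `W'` is obtained from `W` by one order-`x` cycle generation step. -/
def CycleStep (A : V → V → Prop) (x : ℕ) (W W' : Set V) : Prop :=
  ∃ k, k ∉ W ∧ W' = W ∪ {k} ∧ ∃ j ∈ W, A k j ∧ ¬ CyclePart A {k} (W \ {j}) j x

/-- `W` is the last term of a finite chain of order-`x` cycle generation steps
whose first term is a connected pair. -/
def XGenerable (A : V → V → Prop) (x : ℕ) (W : Set V) : Prop :=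
  ∃ P : Set V, ConnectedPair A P ∧ Relation.ReflTransGen (CycleStep A x) P W

/-!
If `k` already lies in `X`, take `Y = X`. Otherwise, as `j` is not dynamically partitioning, some
vertex reaches both `k` and a vertex `w ∈ W \ {j}` in `D − j`. Let `R` be the set of vertices
reaching `k` in `D − j`. Where a path to `w` leaves `R` for the last time we find `y ∈ R` and a
directed path from `y` into `X` whose other vertices lie outside `R`; a directed path from `y` to
`k` (which stays in `R`) followed by the arc `k → j` is a second one, meeting the first only at
`y`. Together they form an ear of the biconnected set `X`, so adding it keeps the set biconnected,
and every new vertex reaches `i` along the arcs of the ear.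
-/

open SimpleGraph Relation

section

variable {A : V → V → Prop} {S T : Set V}

theorem ReachIn.mono (hST : S ⊆ T) {u v : V} (h : ReachIn A S u v) : ReachIn A T u v :=
  ⟨hST h.1, ReflTransGen.mono (fun _ _ hab => ⟨hST hab.1, hST hab.2.1, hab.2.2⟩) _ _ h.2⟩

theorem ReachIn.trans {u v w : V} (huv : ReachIn A S u v) (hvw : ReachIn A S v w) :
    ReachIn A S u w :=
  ⟨huv.1, huv.2.trans hvw.2⟩

theorem reflTransGen_uStep_mono (hST : S ⊆ T) {u v : V} (h : ReflTransGen (UStep A S) u v) :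
    ReflTransGen (UStep A T) u v :=
  ReflTransGen.mono (fun _ _ hab => ⟨hST hab.1, hST hab.2.1, hab.2.2⟩) _ _ h

theorem reflTransGen_uStep_symm {u v : V} (h : ReflTransGen (UStep A S) u v) :
    ReflTransGen (UStep A S) v u :=
  ReflTransGen.mono (fun _ _ hab => ⟨hab.2.1, hab.1, hab.2.2.1.symm, hab.2.2.2.symm⟩) _ _
    (ReflTransGen.swap _ _ h)

theorem ReachIn.target_mem {u v : V} (h : ReachIn A S u v) : v ∈ S := by
  rcases h.2.cases_tail with rfl | ⟨_, _, hstep⟩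
  exacts [h.1, hstep.2.1]

theorem ReachIn.exists_exit {P : Set V} {a b : V} (h : ReachIn A S a b) (ha : a ∈ P)
    (hb : b ∉ P) : ∃ c ∈ P, ∃ d ∉ P, StepIn A S c d ∧ ReachIn A (S \ P) d b := by
  obtain ⟨-, h⟩ := h
  induction h with
  | refl => exact absurd ha hb
  | @tail b' b _ hstep ih =>
    by_cases hb' : b' ∈ P
    · exact ⟨b', hb', b, hb, hstep, ⟨hstep.2.1, hb⟩, .refl⟩
    · obtain ⟨c, hc, d, hd, hcd, hdS, hdb⟩ := ih hb'
      exact ⟨c, hc, d, hd, hcd, hdS, hdb.tail ⟨⟨hstep.1, hb'⟩, ⟨hstep.2.1, hb⟩, hstep.2.2⟩⟩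

theorem uConnected_union (hS : UConnected A S)
    (hT : ∀ t ∈ T, ∃ s ∈ S, ReflTransGen (UStep A (S ∪ T)) t s) : UConnected A (S ∪ T) := by
  have hS' : ∀ u ∈ S ∪ T, ∃ s ∈ S, ReflTransGen (UStep A (S ∪ T)) u s := by
    rintro u (hu | hu)
    exacts [⟨u, hu, .refl⟩, hT u hu]
  refine ⟨hS.1.mono subset_union_left, fun u hu v hv => ?_⟩
  obtain ⟨s, hs, hus⟩ := hS' u hu
  obtain ⟨s', hs', hvs'⟩ := hS' v hv
  exact hus.trans ((reflTransGen_uStep_mono subset_union_left (hS.2 s hs s' hs')).trans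
    (reflTransGen_uStep_symm hvs'))

-- Directed paths are handled as walks of the underlying graph whose darts are all arcs, so that
-- `Walk.bypass` can shorten them to paths.
def FollowsArcs {u v : V} (p : (fromRel A).Walk u v) : Prop :=
  ∀ d ∈ p.darts, A d.fst d.snd

theorem FollowsArcs.concat {u v w : V} {p : (fromRel A).Walk u v} (hp : FollowsArcs p)
    (h : (fromRel A).Adj v w) (hvw : A v w) : FollowsArcs (p.concat h) := by
  intro d hd
  rw [Walk.darts_concat, List.concat_eq_append, List.mem_append, List.mem_singleton] at hd
  rcases hd with hd | rfl
  exacts [hp d hd, hvw]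

theorem reflTransGen_uStep_of_walk {u v : V} (p : (fromRel A).Walk u v)
    (hS : ∀ x ∈ p.support, x ∈ S) : ReflTransGen (UStep A S) u v := by
  induction p with
  | nil => exact .refl
  | cons h p ih =>
    simp only [Walk.support_cons, List.mem_cons, forall_eq_or_imp] at hS
    exact .head ⟨hS.1, hS.2 _ p.start_mem_support, h⟩ (ih hS.2)

theorem reflTransGen_stepIn_of_walk {u v : V} (p : (fromRel A).Walk u v)
    (hS : ∀ x ∈ p.support, x ∈ S) (hA : FollowsArcs p) : ReflTransGen (StepIn A S) u v := by
  induction p with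
  | nil => exact .refl
  | cons h p ih =>
    simp only [Walk.support_cons, List.mem_cons, forall_eq_or_imp] at hS
    simp only [FollowsArcs, Walk.darts_cons, List.mem_cons, forall_eq_or_imp] at hA
    exact .head ⟨hS.1, hS.2 _ p.start_mem_support, hA.1⟩ (ih hS.2 hA.2)

theorem reachIn_of_mem_support {u v e : V} (p : (fromRel A).Walk u v)
    (hS : ∀ x ∈ p.support, x ∈ S) (hA : FollowsArcs p) (he : e ∈ p.support) :
    ReachIn A S e v := by
  obtain ⟨q, r, rfl⟩ := p.mem_support_iff_exists_append.mp he
  refine ⟨hS e he, reflTransGen_stepIn_of_walk r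
    (fun x hx => hS x ((Walk.mem_support_append_iff _ _).mpr (Or.inr hx))) fun d hd => ?_⟩
  exact hA d (by rw [Walk.darts_append]; exact List.mem_append_right _ hd)

theorem ReachIn.exists_isPath {u v : V} (h : ReachIn A S u v) :
    ∃ p : (fromRel A).Walk u v, p.IsPath ∧ (∀ x ∈ p.support, x ∈ S) ∧ FollowsArcs p := by
  classical
  suffices ∃ p : (fromRel A).Walk u v, (∀ x ∈ p.support, x ∈ S) ∧ FollowsArcs p by
    obtain ⟨p, hS, hA⟩ := this
    exact ⟨p.bypass, p.bypass_isPath, fun x hx => hS x (p.support_bypass_subset_support hx),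
      fun d hd => hA d (p.darts_bypass_subset_darts hd)⟩
  obtain ⟨hu, h⟩ := h
  induction h with
  | refl => exact ⟨.nil, by simpa using hu, by simp [FollowsArcs]⟩
  | @tail b c _ hbc ih =>
    obtain ⟨p, hS, hA⟩ := ih
    by_cases hb : b = c
    · exact hb ▸ ⟨p, hS, hA⟩
    · have hadj : (fromRel A).Adj b c := ⟨hb, Or.inl hbc.2.2⟩
      refine ⟨p.concat hadj, fun x hx => ?_, hA.concat hadj hbc.2.2⟩
      rw [Walk.support_concat, List.mem_append, List.mem_singleton] at hx
      rcases hx with hx | rfl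
      exacts [hS x hx, hbc.2.1]

theorem SimpleGraph.Walk.IsPath.exists_reflTransGen_uStep_avoiding {u v t w : V}
    {p : (fromRel A).Walk u v} (hp : p.IsPath) (ht : t ∈ p.support) (htw : t ≠ w) :
    ∃ x, (x = u ∨ x = v) ∧ x ≠ w ∧
      ReflTransGen (UStep A ({z | z ∈ p.support} \ {w})) t x := by
  obtain ⟨q, r, -, -, rfl⟩ := hp.mem_support_iff_exists_append.mp ht
  have hsupp : ∀ z, z ∈ q.support ∨ z ∈ r.support → z ∈ (q.append r).support :=
    fun z hz => (Walk.mem_support_append_iff _ _).mpr hz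
  by_cases hwr : w ∈ r.support
  · have hwq : w ∉ q.support := fun hwq => hp.ne_of_mem_support_of_append htw.symm hwq hwr rfl
    refine ⟨u, .inl rfl, fun h => hwq (h ▸ q.start_mem_support), ?_⟩
    refine reflTransGen_uStep_of_walk q.reverse fun z hz => ?_
    rw [Walk.support_reverse, List.mem_reverse] at hz
    exact ⟨hsupp z (.inl hz), fun h => hwq (h ▸ hz)⟩
  · refine ⟨v, .inr rfl, fun h => hwr (h ▸ r.end_mem_support), ?_⟩
    exact reflTransGen_uStep_of_walk r fun z hz => ⟨hsupp z (.inr hz), fun h => hwr (h ▸ hz)⟩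

theorem Biconnected.union_support {X : Set V} (hX : Biconnected A X) {u v : V}
    {p : (fromRel A).Walk u v} (hp : p.IsPath) (hu : u ∈ X) (hv : v ∈ X) :
    Biconnected A (X ∪ {z | z ∈ p.support}) := by
  have hXfin : X.Finite := finite_of_ncard_pos (by have := hX.1; omega)
  refine ⟨hX.1.trans (ncard_le_ncard subset_union_left (hXfin.union p.support.finite_toSet)),
    uConnected_union hX.2.1 fun t ht => ?_, fun w _ => ?_⟩
  · obtain ⟨q, r, rfl⟩ := p.mem_support_iff_exists_append.mp ht
    refine ⟨v, hv, reflTransGen_uStep_of_walk r fun z hz => .inr ?_⟩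
    exact (Walk.mem_support_append_iff _ _).mpr (.inr hz)
  have hXw : UConnected A (X \ {w}) := by
    by_cases hwX : w ∈ X
    · exact hX.2.2 w hwX
    · rw [sdiff_singleton_eq_self hwX]
      exact hX.2.1
  rw [union_sdiff_distrib]
  refine uConnected_union hXw fun t ⟨ht, htw⟩ => ?_
  obtain ⟨x, hx, hxw, hreach⟩ := hp.exists_reflTransGen_uStep_avoiding ht htw
  refine ⟨x, ⟨by rcases hx with rfl | rfl <;> assumption, hxw⟩, ?_⟩
  exact reflTransGen_uStep_mono subset_union_right hreach

theorem SimpleGraph.Walk.IsPath.reverse_append {y x₁ x₂ : V} {p : (fromRel A).Walk y x₁}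
    {q : (fromRel A).Walk y x₂} (hp : p.IsPath) (hq : q.IsPath)
    (hpq : ∀ z ∈ p.support, z ∉ q.support.tail) : (p.reverse.append q).IsPath := by
  rw [Walk.isPath_def, Walk.support_append, Walk.support_reverse, List.nodup_append]
  exact ⟨List.nodup_reverse.mpr hp.support_nodup, hq.support_nodup.tail,
    fun a ha b hb hab => hpq a (List.mem_reverse.mp ha) (hab ▸ hb)⟩

theorem exists_directedSubBlock_of_ear {X : Set V} {i y x₁ x₂ : V} (hX : Biconnected A X)
    (hiX : i ∈ X) (hreach : ∀ v ∈ X, ReachIn A X v i) {p : (fromRel A).Walk y x₁}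
    {q : (fromRel A).Walk y x₂} (hp : p.IsPath) (hq : q.IsPath) (hpA : FollowsArcs p)
    (hqA : FollowsArcs q) (hx₁ : x₁ ∈ X) (hx₂ : x₂ ∈ X)
    (hpq : ∀ z ∈ p.support, z ∉ q.support.tail) :
    ∃ Y, X ⊆ Y ∧ (∀ z ∈ p.support, z ∈ Y) ∧ DirectedSubBlock A Y ∧
      ∀ v ∈ Y, ReachIn A Y v i := by
  set Y := X ∪ {z | z ∈ (p.reverse.append q).support}
  have hmem : ∀ z, z ∈ p.support ∨ z ∈ q.support → z ∈ Y := fun z hz =>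
    .inr ((Walk.mem_support_append_iff _ _).mpr (by rwa [Walk.support_reverse, List.mem_reverse]))
  have hreachY : ∀ {x} (r : (fromRel A).Walk y x), x ∈ X → FollowsArcs r →
      (∀ z ∈ r.support, z ∈ Y) → ∀ v ∈ r.support, ReachIn A Y v i := fun r hx hrA hrY v hv =>
    (reachIn_of_mem_support r hrY hrA hv).trans ((hreach _ hx).mono subset_union_left)
  have hreachAll : ∀ v ∈ Y, ReachIn A Y v i := by
    rintro v (hv | hv)
    · exact (hreach v hv).mono subset_union_left
    rw [mem_ofPred_eq, Walk.mem_support_append_iff, Walk.support_reverse, List.mem_reverse] at hv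
    rcases hv with hv | hv
    · exact hreachY p hx₁ hpA (fun z hz => hmem z (.inl hz)) v hv
    · exact hreachY q hx₂ hqA (fun z hz => hmem z (.inr hz)) v hv
  refine ⟨Y, subset_union_left, fun z hz => hmem z (.inl hz), ⟨⟨i, .inl hiX, hreachAll⟩, ?_⟩,
    hreachAll⟩
  exact hX.union_support (hp.reverse_append hq hpq) hx₁ hx₂

theorem ReachIn.exists_isPath_exit {R X : Set V} {u w : V} (h : ReachIn A S u w) (hu : u ∈ R)
    (hw : w ∈ X) :
    ∃ y ∈ R, ∃ x ∈ X, ∃ q : (fromRel A).Walk y x, q.IsPath ∧ (∀ z ∈ q.support, z ∈ S) ∧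
      FollowsArcs q ∧ ∀ z ∈ q.support.tail, z ∉ R := by
  by_cases hwR : w ∈ R
  · exact ⟨w, hwR, w, hw, .nil, .nil, by simpa using h.target_mem, by simp [FollowsArcs],
      by simp⟩
  obtain ⟨c, hc, d, hd, hcd, hdw⟩ := h.exists_exit hu hwR
  obtain ⟨β, hβ, hβS, hβA⟩ := hdw.exists_isPath
  have hadj : (fromRel A).Adj c d := ⟨fun h => hd (h ▸ hc), Or.inl hcd.2.2⟩
  refine ⟨c, hc, w, hw, .cons hadj β, ?_, ?_, ?_, ?_⟩
  · exact (Walk.cons_isPath_iff _ _).mpr ⟨hβ, fun hcβ => (hβS c hcβ).2 hc⟩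
  · simpa using And.intro hcd.1 fun z hz => (hβS z hz).1
  · simpa [FollowsArcs] using And.intro hcd.2.2 hβA
  · simpa using fun z hz => (hβS z hz).2

theorem exists_directedSubBlock_of_common_source {X : Set V} {i j k u w : V}
    (hX : Biconnected A X) (hiX : i ∈ X) (hreach : ∀ v ∈ X, ReachIn A X v i) (hjX : j ∈ X)
    (hkj : A k j) (hkj' : k ≠ j) (huk : ReachIn A {j}ᶜ u k) (huw : ReachIn A {j}ᶜ u w)
    (hwX : w ∈ X) :
    ∃ Y, X ⊆ Y ∧ k ∈ Y ∧ DirectedSubBlock A Y ∧ ∀ v ∈ Y, ReachIn A Y v i := by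
  obtain ⟨y, ⟨k', hk', hyk⟩, x, hx, q, hq, hqS, hqA, hqR⟩ :=
    huw.exists_isPath_exit (R := InSet A {j}ᶜ {k}) ⟨k, rfl, huk⟩ hwX
  obtain ⟨α, hα, hαS, hαA⟩ := (eq_of_mem_singleton hk' ▸ hyk).exists_isPath
  have hadj : (fromRel A).Adj k j := ⟨hkj', Or.inl hkj⟩
  have hpq : ∀ z ∈ (α.concat hadj).support, z ∉ q.support.tail := by
    intro z hz hzq
    rw [Walk.support_concat, List.mem_append, List.mem_singleton] at hz
    rcases hz with hz | rfl
    · exact hqR z hzq ⟨k, rfl, reachIn_of_mem_support α hαS hαA hz⟩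
    · exact hqS z (List.mem_of_mem_tail hzq) rfl
  have hkα : k ∈ (α.concat hadj).support := by
    rw [Walk.support_concat]
    exact List.mem_append_left _ α.end_mem_support
  obtain ⟨Y, hXY, hpY, hY⟩ := exists_directedSubBlock_of_ear hX hiX hreach
    (hα.concat (fun h => hαS j h rfl) hadj) hq (hαA.concat hadj hkj) hqA hjX hx hpq
  exact ⟨Y, hXY, hpY k hkα, hY⟩

theorem ExactStep.exists_arc {W : Set V} {k : V}
    (h : ExactStep A W (W ∪ {k})) (hk : k ∉ W) :
    ∃ j ∈ W, A k j ∧ ¬ DynPart A {k} (W \ {j}) {j} := by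
  obtain ⟨k', -, hWk, hj⟩ := h
  obtain rfl : k = k' := by
    have : k ∈ W ∪ {k'} := hWk ▸ mem_union_right W rfl
    exact this.resolve_left hk
  exact hj

theorem reachIn_union_singleton {W : Set V} {i j k : V}
    (hreach : ∀ v ∈ W, ReachIn A W v i) (hjW : j ∈ W) (hkj : A k j) :
    ∀ v ∈ W ∪ {k}, ReachIn A (W ∪ {k}) v i := by
  rintro v (hv | rfl)
  · exact (hreach v hv).mono subset_union_left
  · exact ⟨.inr rfl, .head ⟨.inr rfl, .inl hjW, hkj⟩ ((hreach j hjW).mono subset_union_left).2⟩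

end

theorem stmt6_general (A : V → V → Prop)
    (W X : Set V) (i k : V)
    (hWX : W ⊆ X) (hiW : i ∈ W)
    (hX : DirectedSubBlock A X)
    (hreachW : ∀ v ∈ W, ReachIn A W v i)
    (hreachX : ∀ v ∈ X, ReachIn A X v i)
    (hk : k ∉ W) (hstep : ExactStep A W (W ∪ {k})) :
    ∃ Y : Set V, W ∪ {k} ⊆ Y ∧ DirectedSubBlock A Y ∧
      (∀ v ∈ W ∪ {k}, ReachIn A (W ∪ {k}) v i) ∧
      (∀ v ∈ Y, ReachIn A Y v i) := by
  obtain ⟨j, hjW, hkj, hnot⟩ := hstep.exists_arc hk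
  have hreachW' := reachIn_union_singleton hreachW hjW hkj
  by_cases hkX : k ∈ X
  · exact ⟨X, union_subset hWX (singleton_subset_iff.mpr hkX), hX, hreachW', hreachX⟩
  obtain ⟨u, ⟨k', hk', huk⟩, w, ⟨hwW, -⟩, huw⟩ := nonempty_iff_ne_empty.mpr hnot
  obtain ⟨Y, hXY, hkY, hY, hreachY⟩ := exists_directedSubBlock_of_common_source hX.2 (hWX hiW)
    hreachX (hWX hjW) hkj (fun h => hk (h ▸ hjW)) (eq_of_mem_singleton hk' ▸ huk) huw (hWX hwW)
  exact ⟨Y, union_subset (hWX.trans hXY) (singleton_subset_iff.mpr hkY), hY, hreachW', hreachY⟩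

/-- Lemma A.4, inductive step. -/
theorem stmt6 [Fintype V] (A : V → V → Prop) (hirr : ∀ v : V, ¬ A v v)
    (W X : Set V) (i k : V)
    (hWcard : 3 ≤ W.ncard) (hWX : W ⊆ X) (hiW : i ∈ W)
    (hX : DirectedSubBlock A X)
    (hreachW : ∀ v ∈ W, ReachIn A W v i)
    (hreachX : ∀ v ∈ X, ReachIn A X v i)
    (hk : k ∉ W) (hstep : ExactStep A W (W ∪ {k})) :
    ∃ Y : Set V, W ∪ {k} ⊆ Y ∧ DirectedSubBlock A Y ∧
      (∀ v ∈ W ∪ {k}, ReachIn A (W ∪ {k}) v i) ∧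
      (∀ v ∈ Y, ReachIn A Y v i) :=
  stmt6_general A W X i k hWX hiW hX hreachW hreachX hk hstep
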